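/- arXiv:2008.09776 — 3 statements merged into one kernel-verified Lean document; each statement's English description precedes it below -/
import Mathlib

section
/- (Full exterior algebra identity) With η_i defined as above, η₁η₂⋯η_n = det^[m](A) · ξ ⊕ ⋯ ⊕ ξ ((m−1) factors), where ξ = ξ₁ξ₂⋯ξ_n. -/
open scoped Classical
open Finset Equiv

noncomputable section

variable {F : Type*} [Field F] [CharZero F]

/-- The hyperdeterminant `det^[m]` of an `m`-dimensional tensor of size `n`:
`∑_{σ₁,…,σ_{m-1}} sgn(σ₁⋯σ_{m-1}) ∏_i A(i, σ₁ i, …, σ_{m-1} i)`, encoded as a sum over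
`m`-tuples of permutations whose `0`-th component is forced to be the identity. -/
def hyperdet (m n : ℕ) (A : (Fin m → Fin n) → F) : F :=
  ∑ σ : Fin m → Equiv.Perm (Fin n),
    if (∀ k : Fin m, k.1 = 0 → σ k = 1) then
      (∏ k, ((Equiv.Perm.sign (σ k) : ℤ) : F)) * ∏ i, A fun k => σ k i
    else 0

/-- `blk l n j i` is the `i`-th entry of the `j`-th consecutive block of length `l` in `[l*n]`. -/
def blk (l n : ℕ) (j : Fin n) (i : Fin l) : Fin (l * n) :=
  ⟨j.1 * l + i.1, by
    have hi := i.2; have hj := j.2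
    calc j.1 * l + i.1 < (j.1 + 1) * l := by rw [Nat.add_mul, Nat.one_mul]; omega
      _ ≤ n * l := Nat.mul_le_mul_right l hj
      _ = l * n := Nat.mul_comm n l⟩

/-- A permutation of `[l*n]` is block-increasing if it is increasing on each of the
`n` consecutive blocks of length `l`. -/
def BlockInc (l n : ℕ) (σ : Equiv.Perm (Fin (l * n))) : Prop :=
  ∀ j : Fin n, StrictMono fun i : Fin l => σ (blk l n j i)

/-- The `j`-th block of `σ`, as a subset of `[l*n]`. -/
def blkSet (l n : ℕ) (σ : Equiv.Perm (Fin (l * n))) (j : Fin n) : Finset (Fin (l * n)) :=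
  Finset.image (fun i => σ (blk l n j i)) Finset.univ

/-- The hyperpfaffian `Pf^[l,m]` of an `m`-dimensional `l`-block array of size `l*n`
(the `m` dimensions are indexed by an arbitrary finite type `ι`). -/
def hyperpf (l n : ℕ) {ι : Type*} [Fintype ι]
    (B : (ι → Finset (Fin (l * n))) → F) : F :=
  (n.factorial : F)⁻¹ *
    ∑ σ : ι → Equiv.Perm (Fin (l * n)),
      if ∀ s, BlockInc l n (σ s) then
        (∏ s, ((Equiv.Perm.sign (σ s) : ℤ) : F)) *
          ∏ k : Fin n, B fun s => blkSet l n (σ s) k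
      else 0

/-- The hyperhafnian `Hf^[l,m]` (same sum as the hyperpfaffian, without signs). -/
def hyperhf (l n : ℕ) {ι : Type*} [Fintype ι]
    (B : (ι → Finset (Fin (l * n))) → F) : F :=
  (n.factorial : F)⁻¹ *
    ∑ σ : ι → Equiv.Perm (Fin (l * n)),
      if ∀ s, BlockInc l n (σ s) then
        ∏ k : Fin n, B fun s => blkSet l n (σ s) k
      else 0

/-- The Grassmann generator `ξ_i` in the exterior algebra on `Fin n → F`. -/
def xi (F : Type*) [Field F] (n : ℕ) (i : Fin n) : ExteriorAlgebra F (Fin n → F) :=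
  ExteriorAlgebra.ι F (Pi.single i 1)

/-- `ξ_I`, the product of the generators `ξ_i`, `i ∈ I`, in increasing order. -/
def xiSet (F : Type*) [Field F] (n : ℕ) (I : Finset (Fin n)) :
    ExteriorAlgebra F (Fin n → F) :=
  ((I.sort (· ≤ ·)).map (xi F n)).prod

/-- `ξ = ξ₁ξ₂⋯ξ_n`. -/
def xiFull (F : Type*) [Field F] (n : ℕ) : ExteriorAlgebra F (Fin n → F) :=
  ((List.finRange n).map (xi F n)).prod

/-- `η_i = ∑ A(i, i⁽¹⁾,…,i⁽ᵐ⁻¹⁾) ξ_{i⁽¹⁾} ⊕ ⋯ ⊕ ξ_{i⁽ᵐ⁻¹⁾}` in the `(m-1)`-fold tensor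
product of exterior algebras (here `m = q+1`). -/
def eta {F : Type*} [Field F] {q n : ℕ} (A : (Fin (q + 1) → Fin n) → F) (i : Fin n) :
    PiTensorProduct F (fun _ : Fin q => ExteriorAlgebra F (Fin n → F)) :=
  ∑ f : Fin q → Fin n,
    A (Fin.cons i f) • PiTensorProduct.tprod F (fun k => xi F n (f k))

/- Expanding the ordered product `η₁⋯ηₙ` gives a sum over `n × (m-1)` index matrices `g` of
pure tensors whose `k`-th factor is `ξ_{g 1 k}⋯ξ_{g n k}`. This vanishes unless the `k`-th column
of `g` is a permutation `σₖ`, and then it equals `sign σₖ • ξ`; what remains is the sum defining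
`det^[m](A)`. -/

theorem List.prod_ofFn_sum_smul {R A α : Type*} [CommSemiring R] [Semiring A] [Algebra R A]
    [Fintype α] {n : ℕ} (c : Fin n → α → R) (x : Fin n → α → A) :
    (List.ofFn fun i => ∑ a, c i a • x i a).prod
      = ∑ g : Fin n → α, (∏ i, c i (g i)) • (List.ofFn fun i => x i (g i)).prod := by
  simpa [MultilinearMap.mkPiAlgebraFin_apply, MultilinearMap.map_smul_univ] using
    (MultilinearMap.mkPiAlgebraFin R n A).map_sum fun i a => c i a • x i a

theorem PiTensorProduct.prod_ofFn_tprod {R ι : Type*} [CommSemiring R] {A : ι → Type*}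
    [∀ i, Semiring (A i)] [∀ i, Algebra R (A i)] {n : ℕ} (x : Fin n → (i : ι) → A i) :
    (List.ofFn fun j => tprod R (x j)).prod = tprod R fun i => (List.ofFn fun j => x j i).prod := by
  have h := map_list_prod (tprodMonoidHom R (A := A)) (List.ofFn x)
  simp only [tprodMonoidHom_apply, List.map_ofFn, Function.comp_def] at h
  rw [← h]
  congr 1
  funext i
  rw [Pi.list_prod_apply, List.map_ofFn]
  rfl

theorem PiTensorProduct.sum_smul_tprod_alternatingMap_columns {R M N ι κ : Type*} [CommRing R]
    [AddCommGroup M] [Module R M] [AddCommGroup N] [Module R N]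
    [Fintype ι] [DecidableEq ι] [Fintype κ] [DecidableEq κ]
    (f : M [⋀^ι]→ₗ[R] N) (v : ι → M) (c : (ι → κ → ι) → R) :
    ∑ g : ι → κ → ι, c g • tprod R (fun k => f fun i => v (g i k))
      = ∑ σ : κ → Perm ι, (c (fun i k => σ k i) * ∏ k, ((Perm.sign (σ k) : ℤ) : R)) •
          tprod R (fun _ : κ => f v) := by
  symm
  refine Fintype.sum_of_injective (fun σ i k => σ k i) ?_ _ _ ?_ ?_
  · intro σ τ h
    funext k
    ext i
    exact congrFun (congrFun h i) k
  · intro g hg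
    obtain ⟨k, hk⟩ : ∃ k, ¬ Function.Injective fun i => g i k := by
      by_contra! hinj
      exact hg ⟨fun k => Equiv.ofBijective _ (Finite.injective_iff_bijective.mp (hinj k)), rfl⟩
    have hcol : f (fun i => v (g i k)) = 0 :=
      f.map_eq_zero_of_not_injective _ fun h => hk h.of_comp
    rw [(tprod R).map_coord_zero k hcol, smul_zero]
  · intro σ
    have hperm (k : κ) : f (fun i => v (σ k i)) = ((Perm.sign (σ k) : ℤ) : R) • f v := by
      rw [Int.cast_smul_eq_zsmul, ← Units.smul_def]
      exact f.map_perm v (σ k)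
    simp only [hperm, MultilinearMap.map_smul_univ, smul_smul]

lemma hyperdet_succ_eq_sum {K : Type*} [Field K] (q n : ℕ) (A : (Fin (q + 1) → Fin n) → K) :
    hyperdet (q + 1) n A = ∑ σ : Fin q → Perm (Fin n),
      (∏ k, ((Perm.sign (σ k) : ℤ) : K)) * ∏ i, A (Fin.cons i fun k => σ k i) := by
  rw [hyperdet, ← (Fin.consEquiv _).sum_comp, Fintype.sum_prod_type, Finset.sum_eq_single 1]
  · have hcol (τ : Fin q → Perm (Fin n)) (i : Fin n) :
        (fun k => (Fin.cons 1 τ : Fin (q + 1) → Perm (Fin n)) k i) = Fin.cons i fun k => τ k i := by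
      ext k
      cases k using Fin.cases <;> rfl
    simp [Fin.prod_univ_succ, hcol]
  · intro p _ hp
    simp [hp]
  · simp

lemma xiFull_eq_ιMulti (K : Type*) [Field K] (n : ℕ) :
    xiFull K n = ExteriorAlgebra.ιMulti K n fun i => (Pi.single i 1 : Fin n → K) := by
  rw [ExteriorAlgebra.ιMulti_apply, xiFull, ← List.ofFn_eq_map]
  rfl

lemma prod_map_eta_eq_sum {K : Type*} [Field K] (q n : ℕ) (A : (Fin (q + 1) → Fin n) → K) :
    ((List.finRange n).map (eta A)).prod = ∑ g : Fin n → Fin q → Fin n,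
      (∏ i, A (Fin.cons i (g i))) • PiTensorProduct.tprod K
        fun k => ExteriorAlgebra.ιMulti K n fun i => (Pi.single (g i k) 1 : Fin n → K) := by
  rw [← List.ofFn_eq_map]
  unfold eta
  rw [List.prod_ofFn_sum_smul]
  simp only [PiTensorProduct.prod_ofFn_tprod]
  rfl

theorem eta_prod_full_general (q n : ℕ)
    (A : (Fin (q + 1) → Fin n) → F) :
    ((List.finRange n).map (eta A)).prod
    = hyperdet (q + 1) n A •
        PiTensorProduct.tprod F (fun _ : Fin q => xiFull F n) := by
  rw [prod_map_eta_eq_sum]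
  -- `erw`: the two sides reach the `CommSemiring F` and `AddCommMonoid` instances by different paths
  erw [PiTensorProduct.sum_smul_tprod_alternatingMap_columns (ExteriorAlgebra.ιMulti F n)
    (fun j => Pi.single j 1) fun g => ∏ i, A (Fin.cons i (g i))]
  rw [xiFull_eq_ιMulti, ← Finset.sum_smul, hyperdet_succ_eq_sum]
  simp_rw [mul_comm]

/-- The full product `η₁⋯η_n` equals `det^[m](A) · ξ ⊕ ⋯ ⊕ ξ`. -/
theorem eta_prod_full (q n : ℕ) (hm : Even (q + 1)) (hn : 0 < n)
    (A : (Fin (q + 1) → Fin n) → F) :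
    ((List.finRange n).map (eta A)).prod
    = hyperdet (q + 1) n A •
        PiTensorProduct.tprod F (fun _ : Fin q => xiFull F n) :=
  eta_prod_full_general q n A
end
end

section
/- (Exponential/Grassmann characterization of the hyperpfaffian) For an m-dimensional l-block array B of size ln with l even, let ζ = ∑_{I^(1),…,I^(m) ∈ C([ln],l)} B(I^(1),…,I^(m)) ξ_{I^(1)} ⊕ ⋯ ⊕ ξ_{I^(m)} in the m-fold tensor product of exterior algebras on ξ₁,…,ξ_{ln}. Then ζ^n = n! · Pf^[l,m](B) · ξ ⊕ ⋯ ⊕ ξ (m factors), where ξ = ξ₁⋯ξ_{ln}. -/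
open scoped Classical
open Finset Equiv

noncomputable section

variable {F : Type*} [Field F] [CharZero F]

/-!
Expanding `ζ^n` (the product of the tensor algebra is taken factorwise) gives a sum over
`n × m` arrays of `l`-sets `f k s`, and in factor `s` the product `ξ_{f 0 s} ⋯ ξ_{f (n-1) s}`
is the monomial of the word obtained by concatenating the sorted blocks. That monomial
vanishes unless the word lists every index once, i.e. is a permutation `τ` of `[l n]`, and then
it equals `sgn τ · ξ`. Such words are exactly those of block-increasing permutations, whose
blocks recover the sets `f k s`; this bijection matches the surviving terms with those of
`n! Pf^[l,m](B)`.
-/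

theorem Fintype.sum_pow_eq_sum_list_prod {ι R : Type*} [Fintype ι] [Semiring R] (x : ι → R)
    (N : ℕ) : (∑ i, x i) ^ N = ∑ f : Fin N → ι, (List.ofFn fun k => x (f k)).prod := by
  induction N with
  | zero => simp
  | succ N ih =>
    rw [pow_succ', ih, Finset.sum_mul_sum, ← (Fin.consEquiv fun _ => ι).sum_comp,
      Fintype.sum_prod_type]
    simp [List.ofFn_succ]

theorem List.prod_ofFn_smul {R A : Type*} [CommMonoid R] [Monoid A] [MulAction R A]
    [IsScalarTower R A A] [SMulCommClass R A A] {N : ℕ} (c : Fin N → R) (t : Fin N → A) :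
    (List.ofFn fun k => c k • t k).prod = (∏ k, c k) • (List.ofFn t).prod := by
  induction N with
  | zero => simp
  | succ N ih =>
    rw [List.ofFn_succ, List.prod_cons, ih, List.ofFn_succ (f := t), List.prod_cons,
      Fin.prod_univ_succ, smul_mul_smul_comm]

theorem PiTensorProduct.list_prod_ofFn_tprod {R ι : Type*} [CommSemiring R] {A : ι → Type*}
    [∀ i, Semiring (A i)] [∀ i, Algebra R (A i)] {N : ℕ} (v : Fin N → ∀ i, A i) :
    (List.ofFn fun k => tprod R (v k)).prod =
      tprod R fun i => (List.ofFn fun k => v k i).prod := by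
  have := map_list_prod (tprodMonoidHom R (A := A)) (List.ofFn v)
  simp only [tprodMonoidHom_apply, List.map_ofFn, Function.comp_def] at this
  rw [← this]
  congr 1
  funext i
  rw [Pi.list_prod_apply, List.map_ofFn]
  rfl

theorem List.Nodup.exists_perm_ofFn_eq {N : ℕ} {L : List (Fin N)} (hL : L.Nodup)
    (hlen : L.length = N) : ∃ τ : Equiv.Perm (Fin N), List.ofFn τ = L := by
  have hinj : Function.Injective fun i => L.get (Fin.cast hlen.symm i) :=
    (List.nodup_iff_injective_get.mp hL).comp (Fin.cast_injective _)
  refine ⟨Equiv.ofBijective _ (Finite.injective_iff_bijective.mp hinj), ?_⟩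
  exact List.ext_get (by simp [hlen]) fun i _ _ => by simp

theorem List.ofFn_eq_sort_iff {α : Type*} [LinearOrder α] {l : ℕ} (g : Fin l → α)
    (I : Finset α) :
    List.ofFn g = I.sort (· ≤ ·) ↔ StrictMono g ∧ Finset.image g univ = I := by
  constructor
  · intro h
    refine ⟨List.sortedLT_ofFn_iff.mp (h ▸ Finset.sortedLT_sort I), ?_⟩
    rw [← Finset.sort_toFinset I (· ≤ ·), ← h]
    ext; simp
  · rintro ⟨hg, rfl⟩
    have hnd : (List.ofFn g).Nodup := List.nodup_ofFn.mpr hg.injective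
    have himg : Finset.image g univ = (List.ofFn g).toFinset := by ext; simp
    rw [himg, eq_comm, List.toFinset_sort _ hnd]
    exact (List.sortedLT_ofFn_iff.mpr hg).pairwise.imp le_of_lt

def xiList (K : Type*) [Field K] (N : ℕ) (L : List (Fin N)) : ExteriorAlgebra K (Fin N → K) :=
  (L.map (xi K N)).prod

section GrassmannMonomials

variable {K : Type*} [Field K] {N : ℕ}

theorem xiList_ofFn {k : ℕ} (g : Fin k → Fin N) :
    xiList K N (List.ofFn g) = ExteriorAlgebra.ιMulti K k fun i => Pi.single (g i) 1 := by
  rw [ExteriorAlgebra.ιMulti_apply, xiList, List.map_ofFn]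
  rfl

theorem xiList_eq_zero_of_not_nodup {L : List (Fin N)} (hL : ¬L.Nodup) : xiList K N L = 0 := by
  obtain ⟨i, j, hij, hne⟩ : ∃ i j, L.get i = L.get j ∧ i ≠ j := by
    simpa [List.nodup_iff_injective_get, Function.Injective] using hL
  rw [← List.ofFn_get L, xiList_ofFn]
  exact AlternatingMap.map_eq_zero_of_eq _ _ (by rw [hij]) hne

theorem xiList_ofFn_perm (τ : Perm (Fin N)) :
    xiList K N (List.ofFn τ) = ((Perm.sign τ : ℤ) : K) • xiFull K N := by
  change _ = _ • xiList K N (List.finRange N)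
  rw [← List.ofFn_id, xiList_ofFn, xiList_ofFn, Int.cast_smul_eq_zsmul, ← Units.smul_def]
  exact (ExteriorAlgebra.ιMulti K N).map_perm (fun i => Pi.single i 1) τ

end GrassmannMonomials

section Blocks

variable {l n : ℕ}

def blockSort {α : Type*} [LinearOrder α] (J : Fin n → Finset α) : List α :=
  (List.ofFn fun k => (J k).sort (· ≤ ·)).flatten

theorem length_blockSort {α : Type*} [LinearOrder α] {J : Fin n → Finset α}
    (hJ : ∀ k, (J k).card = l) : (blockSort J).length = l * n := by
  simp [blockSort, Function.comp_def, hJ, Nat.mul_comm]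

theorem List.ofFn_eq_flatten_blk {α : Type*} (g : Fin (l * n) → α) :
    List.ofFn g = (List.ofFn fun k => List.ofFn fun i => g (blk l n k i)).flatten := by
  rw [List.ofFn_mul']
  congr! 5 with k i
  simp [blk, Nat.mul_comm]

theorem card_blkSet (σ : Perm (Fin (l * n))) (k : Fin n) : (blkSet l n σ k).card = l := by
  rw [blkSet, Finset.card_image_of_injective, card_univ, Fintype.card_fin]
  intro i j h
  simpa [blk, Fin.ext_iff] using h

theorem ofFn_eq_blockSort_iff {σ : Perm (Fin (l * n))} {J : Fin n → Finset (Fin (l * n))}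
    (hJ : ∀ k, (J k).card = l) :
    List.ofFn σ = blockSort J ↔ BlockInc l n σ ∧ ∀ k, blkSet l n σ k = J k := by
  have hlen : (List.ofFn fun k => List.ofFn fun i => σ (blk l n k i)).map List.length =
      (List.ofFn fun k => (J k).sort (· ≤ ·)).map List.length := by
    simp [Function.comp_def, hJ]
  rw [List.ofFn_eq_flatten_blk, blockSort, ← List.eq_iff_flatten_eq.trans (and_iff_left hlen),
    List.ofFn_inj, funext_iff]
  simp only [List.ofFn_eq_sort_iff, forall_and]
  rfl

theorem BlockInc.eq_of_blkSet_eq {σ τ : Perm (Fin (l * n))} (hσ : BlockInc l n σ)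
    (hτ : BlockInc l n τ) (h : blkSet l n σ = blkSet l n τ) : σ = τ := by
  have hσ' := (ofFn_eq_blockSort_iff (card_blkSet σ)).mpr ⟨hσ, fun _ => rfl⟩
  have hτ' := (ofFn_eq_blockSort_iff (card_blkSet τ)).mpr ⟨hτ, fun _ => rfl⟩
  exact Equiv.coe_fn_injective (List.ofFn_injective (hσ'.trans (h ▸ hτ'.symm)))

variable {K : Type*} [Field K]

theorem xiList_blockSort_blkSet {σ : Perm (Fin (l * n))} (hσ : BlockInc l n σ) :
    xiList K (l * n) (blockSort (blkSet l n σ)) =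
      ((Perm.sign σ : ℤ) : K) • xiFull K (l * n) := by
  rw [← (ofFn_eq_blockSort_iff (card_blkSet σ)).mpr ⟨hσ, fun _ => rfl⟩, xiList_ofFn_perm]

theorem exists_blockInc_of_xiList_blockSort_ne_zero {J : Fin n → Finset (Fin (l * n))}
    (hJ : ∀ k, (J k).card = l) (h : xiList K (l * n) (blockSort J) ≠ 0) :
    ∃ σ : Perm (Fin (l * n)), BlockInc l n σ ∧ blkSet l n σ = J := by
  have hnd : (blockSort J).Nodup := not_not.mp (mt xiList_eq_zero_of_not_nodup h)
  obtain ⟨σ, hσ⟩ := hnd.exists_perm_ofFn_eq (length_blockSort hJ)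
  obtain ⟨hinc, hset⟩ := (ofFn_eq_blockSort_iff hJ).mp hσ
  exact ⟨σ, hinc, funext hset⟩

end Blocks

theorem prod_ofFn_xiSet {K : Type*} [Field K] {N n : ℕ} (J : Fin n → Finset (Fin N)) :
    (List.ofFn fun k => xiSet K N (J k)).prod = xiList K N (blockSort J) := by
  rw [xiList, blockSort, List.map_flatten, List.prod_flatten, List.map_ofFn, List.map_ofFn]
  rfl

theorem pow_sum_smul_tprod_xiSet {K ι : Type*} [Field K] [Fintype ι] [DecidableEq ι] {N : ℕ}
    (c : (ι → Finset (Fin N)) → K) (n : ℕ) :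
    (∑ J : ι → Finset (Fin N), c J • PiTensorProduct.tprod K fun s => xiSet K N (J s)) ^ n =
      ∑ f : Fin n → ι → Finset (Fin N),
        (∏ k, c (f k)) •
          PiTensorProduct.tprod K fun s => xiList K N (blockSort fun k => f k s) := by
  rw [Fintype.sum_pow_eq_sum_list_prod]
  refine Finset.sum_congr rfl fun f _ => ?_
  simp_rw [List.prod_ofFn_smul, PiTensorProduct.list_prod_ofFn_tprod, prod_ofFn_xiSet]

theorem sum_blockInc_eq_sum_blockSort {K ι : Type*} [Field K] [Fintype ι] {l n : ℕ}
    (B : (ι → Finset (Fin (l * n))) → K) :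
    (∑ σ : ι → Perm (Fin (l * n)),
        if ∀ s, BlockInc l n (σ s) then
          ((∏ s, ((Perm.sign (σ s) : ℤ) : K)) *
              ∏ k : Fin n, B fun s => blkSet l n (σ s) k) •
            PiTensorProduct.tprod K (fun _ : ι => xiFull K (l * n))
        else 0) =
      ∑ f : Fin n → ι → Finset (Fin (l * n)),
        (∏ k, if ∀ s, (f k s).card = l then B (f k) else 0) •
          PiTensorProduct.tprod K fun s => xiList K (l * n) (blockSort fun k => f k s) := by
  rw [← Finset.sum_filter]
  refine Finset.sum_of_injOn (fun σ k s => blkSet l n (σ s) k) ?inj (by simp) ?zero ?val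
  case inj =>
    intro σ hσ τ hτ h
    simp only [mem_coe, mem_filter, mem_univ, true_and] at hσ hτ
    exact funext fun s =>
      (hσ s).eq_of_blkSet_eq (hτ s) (funext fun k => congrFun (congrFun h k) s)
  case zero =>
    intro f _ hf
    by_contra hne
    have hcard : ∀ k s, (f k s).card = l := fun k =>
      (ite_ne_right_iff.mp (prod_ne_zero_iff.mp (left_ne_zero_of_smul hne) k (mem_univ k))).1
    have hξ : ∀ s, xiList K (l * n) (blockSort fun k => f k s) ≠ 0 := fun s h0 =>
      right_ne_zero_of_smul hne (MultilinearMap.map_coord_zero _ s h0)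
    choose σ hσ hset using fun s =>
      exists_blockInc_of_xiList_blockSort_ne_zero (fun k => hcard k s) (hξ s)
    exact hf ⟨σ, by simpa using hσ, funext fun k => funext fun s => congrFun (hset s) k⟩
  case val =>
    intro σ hσ
    simp only [mem_filter, mem_univ, true_and] at hσ
    have hξ : (fun s => xiList K (l * n) (blockSort fun k => blkSet l n (σ s) k)) =
        fun s => ((Perm.sign (σ s) : ℤ) : K) • xiFull K (l * n) :=
      funext fun s => xiList_blockSort_blkSet (hσ s)
    simp only [card_blkSet, implies_true, if_true]
    rw [hξ, MultilinearMap.map_smul_univ, smul_smul, mul_comm (∏ k : Fin n, _)]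

theorem zeta_pow_eq_hyperpf_general (l m n : ℕ)
    (B : (Fin m → Finset (Fin (l * n))) → F) :
    (∑ J : Fin m → Finset (Fin (l * n)),
        if ∀ s, (J s).card = l then
          B J • PiTensorProduct.tprod F (fun s : Fin m => xiSet F (l * n) (J s))
        else 0) ^ n
    = ((n.factorial : F) * hyperpf l n B) •
        PiTensorProduct.tprod F (fun _ : Fin m => xiFull F (l * n)) := by
  simp only [← ite_zero_smul]
  rw [pow_sum_smul_tprod_xiSet, hyperpf, ← mul_assoc,
    mul_inv_cancel₀ (Nat.cast_ne_zero.mpr n.factorial_ne_zero), one_mul, Finset.sum_smul]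
  simp only [ite_smul, zero_smul]
  -- `convert` identifies the classical `Fintype`/`Decidable` instances used in `hyperpf`
  convert (sum_blockInc_eq_sum_blockSort B).symm

/-- Grassmann characterization of the hyperpfaffian: `ζ^n = n! Pf^[l,m](B) ξ ⊕ ⋯ ⊕ ξ`. -/
theorem zeta_pow_eq_hyperpf (l m n : ℕ) (hl : Even l) (hl0 : 0 < l) (hn : 0 < n)
    (B : (Fin m → Finset (Fin (l * n))) → F) :
    (∑ J : Fin m → Finset (Fin (l * n)),
        if ∀ s, (J s).card = l then
          B J • PiTensorProduct.tprod F (fun s : Fin m => xiSet F (l * n) (J s))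
        else 0) ^ n
    = ((n.factorial : F) * hyperpf l n B) •
        PiTensorProduct.tprod F (fun _ : Fin m => xiFull F (l * n)) :=
  zeta_pow_eq_hyperpf_general l m n B
end
end

section
/- (Diagonal specialization of the minor summation formula) In the setting of the determinantal minor summation formula, if the r-dimensional array A factors as A(I^(1),…,I^(r)) = A₀(I^(1)) δ_{I^(1),I^(2)} ⋯ δ_{I^(1),I^(r)} for a 1-dimensional l-block array A₀, then for any ln-subsets P^(1),…,P^(r) of [N], the subhyperpfaffian Pf^[l,r](A_{P^(1),…,P^(r)}) vanishes unless P^(1) = P^(2) = ⋯ = P^(r) = P, in which case it equals Pf^[l,1](A₀ restricted to P) when r is odd and Hf^[l,1](A₀ restricted to P) when r is even. -/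
/-!
Expand `Pf^[l,r]` as a sum over `r`-tuples `(σ_s)` of block-increasing permutations. The
`δ`-factor of the `k`-th block forces the images of the `k`-th blocks of the `σ_s` under the
order embeddings `[ln] → P^(s)` to coincide. Since the blocks of each `σ_s` cover `[ln]`, this
forces `P^(s) = P^(1)`, so off the diagonal every term vanishes. On the diagonal it forces the
blocks of all `σ_s` to coincide, and a block-increasing permutation is determined by its blocks
(each is listed in increasing order), so only constant tuples `σ_s = τ` survive, with sign
`sgn(τ)^r`, which is `sgn(τ)` or `1` according to the parity of `r`.
-/

open scoped Classical
open Finset Equiv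

noncomputable section

variable {F : Type*} [Field F] [CharZero F]

section Blocks

variable {l n : ℕ}

lemma exists_blk_eq (m : Fin (l * n)) : ∃ j i, blk l n j i = m := by
  have hl : 0 < l := Nat.pos_of_ne_zero fun h => by subst h; simpa using m.2
  refine ⟨⟨m / l, (Nat.div_lt_iff_lt_mul hl).2 (by simp [Nat.mul_comm])⟩,
    ⟨m % l, Nat.mod_lt _ hl⟩, Fin.ext (Nat.div_add_mod' m l)⟩

lemma biUnion_blkSet (σ : Perm (Fin (l * n))) : univ.biUnion (blkSet l n σ) = univ := by
  refine eq_univ_of_forall fun x => ?_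
  obtain ⟨j, i, hji⟩ := exists_blk_eq (σ.symm x)
  exact mem_biUnion.2
    ⟨j, mem_univ _, mem_image.2 ⟨i, mem_univ _, by rw [hji, apply_symm_apply]⟩⟩

lemma map_univ_eq_of_forall_map_blkSet_eq {α : Type*} [DecidableEq α] {σ τ : Perm (Fin (l * n))}
    {f g : Fin (l * n) ↪ α} (h : ∀ k, (blkSet l n σ k).map f = (blkSet l n τ k).map g) :
    univ.map f = univ.map g := by
  calc univ.map f = (univ.biUnion (blkSet l n σ)).map f := by rw [biUnion_blkSet]
    _ = (univ.biUnion (blkSet l n τ)).map g := by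
      simp only [map_eq_image, biUnion_image] at h ⊢
      exact biUnion_congr rfl fun k _ => h k
    _ = univ.map g := by rw [biUnion_blkSet]

namespace BlockInc

lemma card_blkSet {σ : Perm (Fin (l * n))} (hσ : BlockInc l n σ) (j : Fin n) :
    (blkSet l n σ j).card = l := by
  rw [blkSet, card_image_of_injective _ (hσ j).injective, card_univ, Fintype.card_fin]

lemma eq_of_blkSet_eq_s17 {σ τ : Perm (Fin (l * n))} (hσ : BlockInc l n σ) (hτ : BlockInc l n τ)
    (h : ∀ k, blkSet l n σ k = blkSet l n τ k) : σ = τ := by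
  have hblk (j : Fin n) : (fun i => σ (blk l n j i)) = fun i => τ (blk l n j i) := by
    rw [orderEmbOfFin_unique (hσ.card_blkSet j) (fun i => mem_image_of_mem _ (mem_univ i)) (hσ j),
      orderEmbOfFin_unique (hσ.card_blkSet j)
        (fun i => h j ▸ mem_image_of_mem _ (mem_univ i)) (hτ j)]
  ext m
  obtain ⟨j, i, rfl⟩ := exists_blk_eq m
  exact congrArg Fin.val (congrFun (hblk j) i)

end BlockInc

end Blocks

section Hyperpf

variable {K : Type*} [Field K] {l n : ℕ}

lemma hyperpf_eq_zero_of_exists_block_eq_zero {ι : Type*} [Fintype ι]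
    (B : (ι → Finset (Fin (l * n))) → K)
    (hB : ∀ σ : ι → Perm (Fin (l * n)), (∀ s, BlockInc l n (σ s)) →
      ∃ k, B (fun s => blkSet l n (σ s) k) = 0) :
    hyperpf l n B = 0 := by
  refine mul_eq_zero_of_right _ (sum_eq_zero fun σ _ => ?_)
  split_ifs with hσ
  · obtain ⟨k, hk⟩ := hB σ hσ
    exact mul_eq_zero_of_right _ (prod_eq_zero (mem_univ k) hk)
  · rfl

def diagArray {α ι : Type*} (i₀ : ι) (C : Finset α → K) (I : ι → Finset α) : K :=
  if ∀ s, I s = I i₀ then C (I i₀) else 0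

/-- For `m = 1` this is `Pf^[l,1](C)`, for `m = 0` it is `Hf^[l,1](C)`. -/
def signedBlockSum (l n m : ℕ) (C : Finset (Fin (l * n)) → K) : K :=
  (n.factorial : K)⁻¹ * ∑ τ : Perm (Fin (l * n)),
    if BlockInc l n τ then (((Perm.sign τ ^ m : ℤˣ) : ℤ) : K) * ∏ k, C (blkSet l n τ k)
    else 0

lemma signedBlockSum_mod_two (m : ℕ) (C : Finset (Fin (l * n)) → K) :
    signedBlockSum l n m C = signedBlockSum l n (m % 2) C := by
  simp only [signedBlockSum, ← Int.units_pow_eq_pow_mod_two]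

lemma hyperpf_fin_one (C : Finset (Fin (l * n)) → K) :
    hyperpf l n (fun I : Fin 1 → Finset (Fin (l * n)) => C (I 0)) = signedBlockSum l n 1 C := by
  rw [hyperpf, signedBlockSum]
  congr 1
  refine sum_equiv (Equiv.funUnique (Fin 1) _) (by simp) fun σ _ => ?_
  simp [Unique.forall_iff]

lemma hyperhf_fin_one (C : Finset (Fin (l * n)) → K) :
    hyperhf l n (fun I : Fin 1 → Finset (Fin (l * n)) => C (I 0)) = signedBlockSum l n 0 C := by
  rw [hyperhf, signedBlockSum]
  congr 1
  refine sum_equiv (Equiv.funUnique (Fin 1) _) (by simp) fun σ _ => ?_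
  simp [Unique.forall_iff]

lemma hyperpf_diagArray {ι : Type*} [Fintype ι] (i₀ : ι) (C : Finset (Fin (l * n)) → K) :
    hyperpf l n (diagArray i₀ C) = signedBlockSum l n (Fintype.card ι) C := by
  have : Nonempty ι := ⟨i₀⟩
  rw [hyperpf, signedBlockSum]
  congr 1
  refine (Fintype.sum_of_injective (fun τ _ => τ) (fun τ τ' h => congrFun h i₀) _ _
    ?_ ?_).symm
  · intro σ hσ
    split_ifs with hB
    · obtain ⟨s, hs⟩ : ∃ s, σ s ≠ σ i₀ := by
        by_contra! h
        exact hσ ⟨σ i₀, funext fun s => (h s).symm⟩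
      obtain ⟨k, hk⟩ : ∃ k, blkSet l n (σ s) k ≠ blkSet l n (σ i₀) k := by
        by_contra! h
        exact hs ((hB s).eq_of_blkSet_eq_s17 (hB i₀) h)
      exact mul_eq_zero_of_right _ (prod_eq_zero (mem_univ k) (if_neg fun h => hk (h s)))
    · rfl
  · intro τ
    simp only [diagArray, forall_const, if_true, prod_const, card_univ]
    push_cast
    rfl

lemma hyperpf_diagArray_eq_ite {ι : Type*} [Fintype ι] (i₀ : ι)
    (C : Finset (Fin (l * n)) → K) :
    hyperpf l n (diagArray i₀ C) =
      if Odd (Fintype.card ι) then hyperpf l n (fun I : Fin 1 → Finset (Fin (l * n)) => C (I 0))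
      else hyperhf l n (fun I : Fin 1 → Finset (Fin (l * n)) => C (I 0)) := by
  rw [hyperpf_diagArray, signedBlockSum_mod_two, hyperpf_fin_one, hyperhf_fin_one]
  split_ifs with h
  · rw [Nat.odd_iff.mp h]
  · rw [Nat.not_odd_iff.mp h]

end Hyperpf

theorem hyperpf_diagonal_general (l r n N : ℕ) (hr : 0 < r)
    (A₀ : Finset (Fin N) → F)
    (P : Fin r → Finset (Fin N)) (hP : ∀ s, (P s).card = l * n) :
    hyperpf l n (fun I : Fin r → Finset (Fin (l * n)) =>
      (fun K : Fin r → Finset (Fin N) =>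
          if ∀ s, K s = K ⟨0, hr⟩ then A₀ (K ⟨0, hr⟩) else 0)
        (fun s => (I s).map ((P s).orderEmbOfFin (hP s)).toEmbedding))
    = if ∀ s, P s = P ⟨0, hr⟩ then
        (if Odd r then
          hyperpf l n (fun I : Fin 1 → Finset (Fin (l * n)) =>
            A₀ ((I 0).map ((P ⟨0, hr⟩).orderEmbOfFin (hP ⟨0, hr⟩)).toEmbedding))
        else
          hyperhf l n (fun I : Fin 1 → Finset (Fin (l * n)) =>
            A₀ ((I 0).map ((P ⟨0, hr⟩).orderEmbOfFin (hP ⟨0, hr⟩)).toEmbedding)))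
      else 0 := by
  set e := (P ⟨0, hr⟩).orderEmbOfFin (hP ⟨0, hr⟩)
  by_cases hPP : ∀ s, P s = P ⟨0, hr⟩
  · rw [if_pos hPP]
    have he (s : Fin r) : (P s).orderEmbOfFin (hP s) = e :=
      (orderEmbOfFin_unique' _ fun x => hPP s ▸ orderEmbOfFin_mem _ _ x).symm
    calc _ = hyperpf l n (diagArray (⟨0, hr⟩ : Fin r)
          fun J : Finset (Fin (l * n)) => A₀ (J.map e.toEmbedding)) := by
          congr with I
          simp only [diagArray, he, map_inj]
      _ = _ := by rw [hyperpf_diagArray_eq_ite, Fintype.card_fin]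
  · rw [if_neg hPP]
    apply hyperpf_eq_zero_of_exists_block_eq_zero
    intro σ _
    by_contra! hσ
    refine hPP fun s => ?_
    have hblk (k : Fin n) : ∀ s,
        (blkSet l n (σ s) k).map ((P s).orderEmbOfFin (hP s)).toEmbedding =
          (blkSet l n (σ ⟨0, hr⟩) k).map e.toEmbedding :=
      of_not_not fun hk => hσ k (if_neg hk)
    simpa only [e, map_orderEmbOfFin_univ] using
      map_univ_eq_of_forall_map_blkSet_eq fun k => hblk k s

/-- Diagonal specialization: the subhyperpfaffian of a diagonally factored array. -/
theorem hyperpf_diagonal (l r n N : ℕ) (hl : Even l) (hl0 : 0 < l) (hr : 0 < r)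
    (hn : 0 < n) (hN : l * n ≤ N)
    (A₀ : Finset (Fin N) → F)
    (P : Fin r → Finset (Fin N)) (hP : ∀ s, (P s).card = l * n) :
    hyperpf l n (fun I : Fin r → Finset (Fin (l * n)) =>
      (fun K : Fin r → Finset (Fin N) =>
          if ∀ s, K s = K ⟨0, hr⟩ then A₀ (K ⟨0, hr⟩) else 0)
        (fun s => (I s).map ((P s).orderEmbOfFin (hP s)).toEmbedding))
    = if ∀ s, P s = P ⟨0, hr⟩ then
        (if Odd r then
          hyperpf l n (fun I : Fin 1 → Finset (Fin (l * n)) =>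
            A₀ ((I 0).map ((P ⟨0, hr⟩).orderEmbOfFin (hP ⟨0, hr⟩)).toEmbedding))
        else
          hyperhf l n (fun I : Fin 1 → Finset (Fin (l * n)) =>
            A₀ ((I 0).map ((P ⟨0, hr⟩).orderEmbOfFin (hP ⟨0, hr⟩)).toEmbedding)))
      else 0 :=
  hyperpf_diagonal_general l r n N hr A₀ P hP
end
end
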